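/- Let p ≥ 5 be a prime and let E be the smallest even positive integer that does not occur among the slacks S_d = d·(⌊p/d⌋ + 1) − p for 2 ≤ d ≤ (p − 1)/2. If E = 2, then p + 2 is prime. -/
import Mathlib


theorem twin_of_missing_slack_two (p : ℕ) (hp : p.Prime) (hp5 : 5 ≤ p)
    (hE : ∀ d, 2 ≤ d → d ≤ (p - 1) / 2 → d * (p / d + 1) - p ≠ 2) :
    (p + 2).Prime := by
  by_contra h
  set n := p + 2 with hn
  have hn1 : n ≠ 1 := by omega
  have hd : (n.minFac).Prime := Nat.minFac_prime hn1
  have hdvd : n.minFac ∣ n := Nat.minFac_dvd n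
  have hsq : n.minFac ^ 2 ≤ n := Nat.minFac_sq_le_self (by omega) h
  set d := n.minFac with hdd
  have hpodd : Odd p := hp.odd_of_ne_two (by omega)
  have hd2 : d ≠ 2 := by
    intro h2
    have : 2 ∣ n := h2 ▸ hdvd
    rcases hpodd with ⟨m, hm⟩
    omega
  have hd3 : 3 ≤ d := by
    have := hd.two_le
    omega
  obtain ⟨k, hk⟩ := hdvd
  have hk1 : 2 ≤ k := by nlinarith [hd.two_le]
  obtain ⟨k', rfl⟩ : ∃ k', k = k' + 1 := ⟨k - 1, by omega⟩
  have hdk : d * (k' + 1) = p + 2 := by omega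
  have hdiv : p / d = k' := by
    apply Nat.div_eq_of_lt_le
    · nlinarith
    · nlinarith
  have hsq' : d * d ≤ p + 2 := by
    have : d ^ 2 = d * d := sq d
    omega
  have hle : d ≤ (p - 1) / 2 := by
    have h3d : 3 * d ≤ p + 2 := by nlinarith
    omega
  exact hE d hd.two_le hle (by rw [hdiv]; omega)
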